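/- In a category C with object A satisfying: every arrow is a strict epimorphism, every object admits an arrow from A, and Hom(A, -) preserves strict epimorphisms, every endomorphism of A is an automorphism, i.e., Aut(A) = Hom(A, A) as a set. -/

import Mathlib

open CategoryTheory

universe v u

/-- Grothendieck strict epimorphism. -/
def IsStrictEpi {C : Type u} [Category.{v} C] {X Y : C} (f : X ⟶ Y) : Prop :=
  ∀ {Z : C} (g : X ⟶ Z),
    (∀ {W : C} (s t : W ⟶ X), s ≫ f = t ≫ f → s ≫ g = t ≫ g) →
    ∃! h : Y ⟶ Z, f ≫ h = g

theorem IsStrictEpi.epi {C : Type u} [Category.{v} C] {X Y : C} {f : X ⟶ Y}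
    (hf : IsStrictEpi f) : Epi f where
  left_cancellation a b hab := by
    obtain ⟨_, _, huniq⟩ := hf (f ≫ a) fun s t hst => by
      rw [← Category.assoc, hst, Category.assoc]
    exact (huniq a rfl).trans (huniq b hab.symm).symm

theorem IsStrictEpi.surjective {X Y : Type v} {f : X ⟶ Y} (hf : IsStrictEpi f) :
    Function.Surjective f :=
  (epi_iff_surjective f).1 hf.epi

theorem stmt1_general {C : Type u} [Category.{v} C] (A : C)
    (h1 : ∀ {X Y : C} (f : X ⟶ Y), IsStrictEpi f)
    (h3 : ∀ {X Y : C} (f : X ⟶ Y), IsStrictEpi f →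
      IsStrictEpi (C := Type v) (X := A ⟶ X) (Y := A ⟶ Y) (TypeCat.ofHom (fun g : A ⟶ X => g ≫ f))) :
    ∀ f : A ⟶ A, IsIso f := by
  intro f
  obtain ⟨s, hs⟩ := IsStrictEpi.surjective (h3 f (h1 f)) (𝟙 A)
  change s ≫ f = 𝟙 A at hs
  have : IsSplitMono s := IsSplitMono.mk' ⟨f, hs⟩
  have : Epi s := IsStrictEpi.epi (h1 s)
  have : IsIso s := isIso_of_epi_of_isSplitMono s
  rw [← IsIso.inv_eq_of_hom_inv_id hs]
  infer_instance

/-- Every endomorphism of `A` is an automorphism: `Aut(A) = Hom(A,A)`. -/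
theorem stmt1 {C : Type u} [Category.{v} C] (A : C)
    (h1 : ∀ {X Y : C} (f : X ⟶ Y), IsStrictEpi f)
    (h2 : ∀ X : C, Nonempty (A ⟶ X))
    (h3 : ∀ {X Y : C} (f : X ⟶ Y), IsStrictEpi f →
      IsStrictEpi (C := Type v) (X := A ⟶ X) (Y := A ⟶ Y) (TypeCat.ofHom (fun g : A ⟶ X => g ≫ f))) :
    ∀ f : A ⟶ A, IsIso f :=
  stmt1_general A h1 h3
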